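/- arXiv:1803.05078 — 5 statements merged into one kernel-verified Lean document; each statement's English description precedes it below -/
import Mathlib

section
/- Conversely, let (W, ≼) be a poset and S : W → W an arbitrary function. If for every ≼-monotone valuation V and every formula φ the truth set ⟦φ⟧ is ≼-monotone, then S is forward confluent, i.e., w ≼ v implies S(w) ≼ S(v). -/
inductive TForm : Type where
  | atom : ℕ → TForm
  | bot : TForm
  | and : TForm → TForm → TForm
  | or : TForm → TForm → TForm
  | imp : TForm → TForm → TForm
  | next : TForm → TForm
  | dia : TForm → TForm
  | box : TForm → TForm
  | untl : TForm → TForm → TForm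
  | rels : TForm → TForm → TForm

/-- Intuitionistic temporal satisfaction over a dynamic poset `(W, ≤, S)`
with valuation `V`. -/
def sat {W : Type} [PartialOrder W] (S : W → W) (V : W → ℕ → Prop) : TForm → W → Prop
  | .atom p, w => V w p
  | .bot, _ => False
  | .and φ ψ, w => sat S V φ w ∧ sat S V ψ w
  | .or φ ψ, w => sat S V φ w ∨ sat S V ψ w
  | .imp φ ψ, w => ∀ v, w ≤ v → sat S V φ v → sat S V ψ v
  | .next φ, w => sat S V φ (S w)
  | .dia φ, w => ∃ k, sat S V φ (S^[k] w)
  | .box φ, w => ∀ k, sat S V φ (S^[k] w)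
  | .untl φ ψ, w => ∃ k, sat S V ψ (S^[k] w) ∧ ∀ i < k, sat S V φ (S^[i] w)
  | .rels φ ψ, w => ∀ k, sat S V ψ (S^[k] w) ∨ ∃ i < k, sat S V φ (S^[i] w)

/-- Formulas using only the connectives ⊥, ∧, ∨, →, and {next, dia, box}. -/
def NoUR : TForm → Prop
  | .atom _ => True
  | .bot => True
  | .and φ ψ => NoUR φ ∧ NoUR ψ
  | .or φ ψ => NoUR φ ∧ NoUR ψ
  | .imp φ ψ => NoUR φ ∧ NoUR ψ
  | .next φ => NoUR φ
  | .dia φ => NoUR φ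
  | .box φ => NoUR φ
  | .untl _ _ => False
  | .rels _ _ => False

/-- If every truth set of every formula (in the ◯,◇,□ language) is `≤`-monotone
for every monotone valuation, then `S` is forward confluent. -/
theorem forward_confluent_of_truth_monotone {W : Type} [PartialOrder W] (S : W → W)
    (h : ∀ V : W → ℕ → Prop, (∀ w v : W, w ≤ v → ∀ p, V w p → V v p) →
      ∀ φ, NoUR φ → ∀ w v : W, w ≤ v → sat S V φ w → sat S V φ v) :
    ∀ w v : W, w ≤ v → S w ≤ S v := by
  intro w v hwv
  -- `p` holds exactly above `S w`, so `◯p` holds at `w` and hence, by monotonicity, at `v`.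
  exact h (fun u _ => S w ≤ u) (fun _ _ hab _ hp => hp.trans hab)
    (.next (.atom 0)) trivial w v hwv le_rfl
end

section
/- The formula □(φ → ◯φ) → (φ → □φ) (the induction axiom) is valid over all ITL^e models: for every model M = (W, ≼, S, V) and every world w, M, w ⊨ □(φ → ◯φ) → (φ → □φ). -/
/-- Intuitionistic biimplication as a defined connective. -/
def TForm.biimp (φ ψ : TForm) : TForm := .and (.imp φ ψ) (.imp ψ φ)

theorem sat_box_of_sat_of_step {W : Type} [PartialOrder W] {S : W → W} {V : W → ℕ → Prop}
    {φ : TForm} {u : W} (h₀ : sat S V φ u)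
    (hstep : ∀ k, sat S V φ (S^[k] u) → sat S V φ (S (S^[k] u))) :
    sat S V (.box φ) u := by
  intro k
  induction k with
  | zero => exact h₀
  | succ k ih => rw [Function.iterate_succ_apply']; exact hstep k ih

theorem induction_axiom_valid_general {W : Type} [PartialOrder W] (S : W → W) (V : W → ℕ → Prop)
    (hS : ∀ w v : W, w ≤ v → S w ≤ S v)
    (φ : TForm) (w : W) :
    sat S V (.imp (.box (.imp φ (.next φ))) (.imp φ (.box φ))) w := by
  intro v _ hbox u hvu hφ
  have hmono : Monotone S := fun _ _ h => hS _ _ h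
  -- Forward confluence gives `S^[k] v ≤ S^[k] u`, so `□(φ → ◯φ)` at `v` applies along the orbit of `u`.
  exact sat_box_of_sat_of_step hφ fun k hk => hbox k _ (hmono.iterate k hvu) hk

/-- The induction axiom □(φ → ◯φ) → (φ → □φ) is ITL^e-valid. -/
theorem induction_axiom_valid {W : Type} [PartialOrder W] (S : W → W) (V : W → ℕ → Prop)
    (hS : ∀ w v : W, w ≤ v → S w ≤ S v)
    (hV : ∀ w v : W, w ≤ v → ∀ p, V w p → V v p)
    (φ : TForm) (w : W) :
    sat S V (.imp (.box (.imp φ (.next φ))) (.imp φ (.box φ))) w :=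
  induction_axiom_valid_general S V hS φ w
end

section
/- The formulas (◯p → ◯q) → ◯(p → q) and (◇p → □q) → □(p → q) are not valid over the class of ITL^e models: there exists a finite ITL^e model with a world falsifying both formulas. -/
/-!
The world `w` has no proper `≼`-successors, so at `w` intuitionistic implication is read
classically, and both antecedents hold there vacuously: `p` fails along the whole orbit
`w, v, v, …`. The consequents fail because `v ≼ u`, where `p` holds and `q` does not, so
`p → q` is refuted at `v = S w`.
-/

namespace Sum

variable {α β γ : Type*}

theorem isMax_inl [LE α] [LE β] {a : α} (h : IsMax a) : IsMax (inl a : α ⊕ β) := by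
  rintro (b | b) hb
  · exact inl_le_inl_iff.2 (h (inl_le_inl_iff.1 hb))
  · exact absurd hb not_inl_le_inr

theorem isMax_inr [LE α] [LE β] {b : β} (h : IsMax b) : IsMax (inr b : α ⊕ β) := by
  rintro (a | a) ha
  · exact absurd ha not_inr_le_inl
  · exact inr_le_inr_iff.2 (h (inr_le_inr_iff.1 ha))

theorem monotone_elim [Preorder α] [Preorder β] [Preorder γ] {f : α → γ} {g : β → γ}
    (hf : Monotone f) (hg : Monotone g) : Monotone (Sum.elim f g) := by
  rintro (a | b) (a' | b') h
  · exact hf (inl_le_inl_iff.1 h)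
  · exact absurd h not_inl_le_inr
  · exact absurd h not_inr_le_inl
  · exact hg (inr_le_inr_iff.1 h)

end Sum

theorem Function.iterate_succ_apply_of_isFixedPt {α : Type*} {f : α → α} {x : α}
    (h : IsFixedPt f (f x)) (k : ℕ) : f^[k + 1] x = f x := by
  rw [iterate_succ_apply]
  exact iterate_fixed h k

namespace TForm

def fischerServiNext (p q : ℕ) : TForm :=
  imp (imp (next (atom p)) (next (atom q))) (next (imp (atom p) (atom q)))

def fischerServiBox (p q : ℕ) : TForm :=
  imp (imp (dia (atom p)) (box (atom q))) (box (imp (atom p) (atom q)))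

end TForm

section Semantics

open TForm Function

variable {W : Type} [PartialOrder W] {S : W → W} {V : W → ℕ → Prop}

theorem sat_imp_of_isMax {w : W} (hw : IsMax w) {φ ψ : TForm}
    (h : sat S V φ w → sat S V ψ w) : sat S V (imp φ ψ) w := by
  intro x hwx hφ
  obtain rfl := hw.eq_of_le hwx
  exact h hφ

theorem not_sat_imp_of_le {w x : W} (hwx : w ≤ x) {φ ψ : TForm} (hφ : sat S V φ x)
    (hψ : ¬ sat S V ψ x) : ¬ sat S V (imp φ ψ) w :=
  fun h => hψ (h x hwx hφ)

theorem sat_dia_iff_of_isFixedPt {w : W} (hw : IsFixedPt S (S w)) {φ : TForm} :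
    sat S V (dia φ) w ↔ sat S V φ w ∨ sat S V φ (S w) := by
  constructor
  · rintro ⟨_ | k, hk⟩
    · exact .inl hk
    · exact .inr (iterate_succ_apply_of_isFixedPt hw k ▸ hk)
  · rintro (h | h)
    · exact ⟨0, h⟩
    · exact ⟨1, h⟩

variable {w u : W} {p q : ℕ} (hw : IsMax w) (hu : S w ≤ u) (hpu : V u p) (hqu : ¬ V u q)
include hw hu hpu hqu

theorem not_sat_fischerServiNext (hpv : ¬ V (S w) p) : ¬ sat S V (fischerServiNext p q) w :=
  not_sat_imp_of_le le_rfl (sat_imp_of_isMax hw fun h => absurd h hpv)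
    (not_sat_imp_of_le (φ := atom p) (ψ := atom q) hu hpu hqu)

theorem not_sat_fischerServiBox (hv : IsFixedPt S (S w)) (hpw : ¬ V w p) (hpv : ¬ V (S w) p) :
    ¬ sat S V (fischerServiBox p q) w := by
  have hdia : ¬ sat S V (dia (atom p)) w := by
    rw [sat_dia_iff_of_isFixedPt hv]
    exact not_or.2 ⟨hpw, hpv⟩
  exact not_sat_imp_of_le le_rfl (sat_imp_of_isMax hw fun h => absurd h hdia)
    fun h => not_sat_imp_of_le (φ := atom p) (ψ := atom q) hu hpu hqu (h 1)

end Semantics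

/-- The witness model on `Unit ⊕ Bool` with the disjoint-sum order: `w = inl ()` is
incomparable to `v = inr false < u = inr true`. -/
def witnessStep : Unit ⊕ Bool → Unit ⊕ Bool :=
  Sum.elim (fun _ => .inr false) .inr

def witnessVal (x : Unit ⊕ Bool) (n : ℕ) : Prop :=
  n = 0 ∧ x = .inr true

theorem witnessStep_monotone : Monotone witnessStep :=
  Sum.monotone_elim monotone_const Sum.inr_mono

theorem witnessVal_mono {x y : Unit ⊕ Bool} (hxy : x ≤ y) {n : ℕ} (h : witnessVal x n) :
    witnessVal y n := by
  obtain ⟨rfl, rfl⟩ := h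
  exact ⟨rfl, ((Sum.isMax_inr isMax_top).eq_of_le hxy).symm⟩

/-- The Fischer Servi formulas (◯p → ◯q) → ◯(p → q) and (◇p → □q) → □(p → q)
are not ITL^e-valid: some finite ITL^e model falsifies both at some world. -/
theorem fischer_servi_not_valid :
    ∃ (W : Type) (inst : PartialOrder W) (_ : Fintype W)
      (S : W → W) (V : W → ℕ → Prop),
      (∀ w v : W, inst.le w v → inst.le (S w) (S v)) ∧
      (∀ w v : W, inst.le w v → ∀ p, V w p → V v p) ∧
      ∃ (w : W) (p q : ℕ),
        ¬ @sat W inst S V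
            (.imp (.imp (.next (.atom p)) (.next (.atom q)))
                  (.next (.imp (.atom p) (.atom q)))) w ∧
        ¬ @sat W inst S V
            (.imp (.imp (.dia (.atom p)) (.box (.atom q)))
                  (.box (.imp (.atom p) (.atom q)))) w := by
  have hw : IsMax (Sum.inl () : Unit ⊕ Bool) := Sum.isMax_inl isMax_top
  have hu : witnessStep (.inl ()) ≤ .inr true := Sum.inr_le_inr_iff.2 le_top
  have hpu : witnessVal (.inr true) 0 := ⟨rfl, rfl⟩
  have hqu : ¬ witnessVal (.inr true) 1 := fun h => one_ne_zero h.1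
  have hpv : ¬ witnessVal (witnessStep (.inl ())) 0 := fun h =>
    Bool.false_ne_true (Sum.inr_injective h.2)
  refine ⟨Unit ⊕ Bool, inferInstance, inferInstance, witnessStep, witnessVal,
    fun _ _ h => witnessStep_monotone h, fun _ _ h _ => witnessVal_mono h, .inl (), 0, 1,
    not_sat_fischerServiNext hw hu hpu hqu hpv,
    not_sat_fischerServiBox hw hu hpu hqu rfl (fun h => Sum.inl_ne_inr h.2) hpv⟩
end

section
/- The formula (◯φ → ◯ψ) → ◯(φ → ψ) is valid over all persistent ITL^e models (models where S is both forward and backward confluent). -/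
theorem sat_next_imp_of_sat_imp_next {W : Type} [PartialOrder W] {S : W → W}
    {V : W → ℕ → Prop} (hB : ∀ w v : W, S w ≤ v → ∃ u, w ≤ u ∧ S u = v) {φ ψ : TForm} {w : W}
    (h : sat S V (.imp (.next φ) (.next ψ)) w) : sat S V (.next (.imp φ ψ)) w := by
  intro v hSwv hv
  obtain ⟨u, hwu, rfl⟩ := hB w v hSwv
  exact h u hwu hv

theorem fischer_servi_next_persistent_general {W : Type} [PartialOrder W] (S : W → W) (V : W → ℕ → Prop)
    (hB : ∀ w v : W, S w ≤ v → ∃ u, w ≤ u ∧ S u = v)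
    (φ ψ : TForm) (w : W) :
    sat S V (.imp (.imp (.next φ) (.next ψ)) (.next (.imp φ ψ))) w :=
  fun _ _ h => sat_next_imp_of_sat_imp_next hB h

/-- The formula (◯φ → ◯ψ) → ◯(φ → ψ) is valid over persistent ITL^e models
(forward and backward confluent `S`). -/
theorem fischer_servi_next_persistent {W : Type} [PartialOrder W] (S : W → W) (V : W → ℕ → Prop)
    (hS : ∀ w v : W, w ≤ v → S w ≤ S v)
    (hV : ∀ w v : W, w ≤ v → ∀ p, V w p → V v p)
    (hB : ∀ w v : W, S w ≤ v → ∃ u, w ≤ u ∧ S u = v)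
    (φ ψ : TForm) (w : W) :
    sat S V (.imp (.imp (.next φ) (.next ψ)) (.next (.imp φ ψ))) w :=
  fischer_servi_next_persistent_general S V hB φ ψ w
end

section
/- The formula (◇φ → □ψ) → □(φ → ψ) is valid over all persistent ITL^e models. -/
/-!
A world `u ≥ S^k v` satisfying `φ` lifts, by backward confluence of `S^k`, to some `t ≥ v` with
`S^k t = u`. Then `t ⊨ ◇φ`, so `t ⊨ □ψ` by the hypothesis at `v`, and in particular `u ⊨ ψ`.
-/

def BackwardConfluent {α β : Type*} [LE α] [LE β] (f : α → β) : Prop :=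
  ∀ w v, f w ≤ v → ∃ u, w ≤ u ∧ f u = v

namespace BackwardConfluent

variable {α β γ : Type*} [LE α] [LE β] [LE γ]

theorem id : BackwardConfluent (id : α → α) :=
  fun _ v h => ⟨v, h, rfl⟩

theorem comp {f : β → γ} {g : α → β} (hf : BackwardConfluent f) (hg : BackwardConfluent g) :
    BackwardConfluent (f ∘ g) := by
  intro w v h
  obtain ⟨u, hu, rfl⟩ := hf (g w) v h
  obtain ⟨t, ht, rfl⟩ := hg w u hu
  exact ⟨t, ht, rfl⟩

theorem iterate {f : α → α} (hf : BackwardConfluent f) : ∀ n, BackwardConfluent f^[n]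
  | 0 => BackwardConfluent.id
  | n + 1 => (hf.iterate n).comp hf

end BackwardConfluent

theorem fischer_servi_dia_box_persistent_general {W : Type} [PartialOrder W] (S : W → W) (V : W → ℕ → Prop)
    (hB : ∀ w v : W, S w ≤ v → ∃ u, w ≤ u ∧ S u = v)
    (φ ψ : TForm) (w : W) :
    sat S V (.imp (.imp (.dia φ) (.box ψ)) (.box (.imp φ ψ))) w := by
  intro v _ hv k u hku hφu
  obtain ⟨t, hvt, rfl⟩ := (BackwardConfluent.iterate hB k) v u hku
  exact hv t hvt ⟨k, hφu⟩ k

/-- The formula (◇φ → □ψ) → □(φ → ψ) is valid over persistent ITL^e models. -/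
theorem fischer_servi_dia_box_persistent {W : Type} [PartialOrder W] (S : W → W) (V : W → ℕ → Prop)
    (hS : ∀ w v : W, w ≤ v → S w ≤ S v)
    (hV : ∀ w v : W, w ≤ v → ∀ p, V w p → V v p)
    (hB : ∀ w v : W, S w ≤ v → ∃ u, w ≤ u ∧ S u = v)
    (φ ψ : TForm) (w : W) :
    sat S V (.imp (.imp (.dia φ) (.box ψ)) (.box (.imp φ ψ))) w :=
  fischer_servi_dia_box_persistent_general S V hB φ ψ w
end
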